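/- Suppose ν has a generating sequence Q_0 = X, Q_1 = Y, Q_2, … in which every Q_l is an eigenfunction for H_{i,j,t,x}. Then for every r ≥ 1: γ_r ∈ S^{(A_{i,j,t,x})_𝔫}(ν) if and only if Q_r ∈ A_{i,j,t,x}. -/

import Mathlib

open MvPolynomial Finset Pointwise

noncomputable section

namespace DuttaPaper

/-- The polynomial ring `K[X,Y]`, with `X = X 0` and `Y = X 1`. -/
abbrev Poly (K : Type) [Field K] : Type := MvPolynomial (Fin 2) K

/-- The rational function field `K(X,Y)`. -/
abbrev RF (K : Type) [Field K] : Type := FractionRing (Poly K)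

variable {K : Type} [Field K]

/-- The `K`-algebra endomorphism of `K[X,Y]` sending `X ↦ u • X`, `Y ↦ v • Y`;
this is the action of `(u,v) ∈ 𝕌_m × 𝕌_n` on `K[X,Y]`. -/
def act (u v : K) : Poly K →ₐ[K] Poly K :=
  MvPolynomial.aeval ![MvPolynomial.C u * MvPolynomial.X 0,
    MvPolynomial.C v * MvPolynomial.X 1]

/-- Membership in the set `H_{i,j,t,x} = {(α^{a i}, β^{b j}) : b ≡ a x (mod t)} ⊆ K × K`. -/
def Hmem (α β : K) (i j t x : ℕ) (p : K × K) : Prop :=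
  ∃ a b : ℤ, b ≡ a * (x : ℤ) [ZMOD (t : ℤ)] ∧
    p = (α ^ (a * (i : ℤ)), β ^ (b * (j : ℤ)))

/-- `f ∈ K[X,Y]` is an eigenfunction for `H_{i,j,t,x}`. -/
def IsEigen (α β : K) (i j t x : ℕ) (f : Poly K) : Prop :=
  ∀ p : K × K, Hmem α β i j t x p → ∃ lam : K, act p.1 p.2 f = lam • f

/-- `f ∈ K[X,Y]` belongs to the invariant ring `A_{i,j,t,x} = K[X,Y]^{H_{i,j,t,x}}`. -/
def Invariant (α β : K) (i j t x : ℕ) (f : Poly K) : Prop :=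
  ∀ p : K × K, Hmem α β i j t x p → act p.1 p.2 f = f

/-- A `ℚ`-valued (rational rank 1) valuation on a field `L`: the data of the values of the
nonzero elements (the value of `0` is irrelevant). -/
structure RatVal (L : Type) [Field L] where
  v : L → ℚ
  v_mul : ∀ a b : L, a ≠ 0 → b ≠ 0 → v (a * b) = v a + v b
  v_add : ∀ a b : L, a ≠ 0 → b ≠ 0 → a + b ≠ 0 → min (v a) (v b) ≤ v (a + b)

/-- Value of a polynomial under a valuation of `K(X,Y)`. -/
def vP (ν : RatVal (RF K)) (f : Poly K) : ℚ :=
  ν.v (algebraMap (Poly K) (RF K) f)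

/-- `ν` dominates `R_𝔪 = K[X,Y]_{(X,Y)}` : `ν ≥ 0` on `R_𝔪` and `ν > 0` on its maximal
ideal (expressed on the level of polynomials). -/
def DominatesRm (ν : RatVal (RF K)) : Prop :=
  (∀ f : Poly K, f ≠ 0 → 0 ≤ vP ν f) ∧
  (∀ f : Poly K, f ≠ 0 → MvPolynomial.constantCoeff f = 0 → 0 < vP ν f)

/-- `ν` is non-discrete: its value group is not a cyclic subgroup of `ℚ`. -/
def Nondiscrete (ν : RatVal (RF K)) : Prop :=
  ¬ ∃ g : ℚ, ∀ z : RF K, z ≠ 0 → ∃ k : ℤ, ν.v z = (k : ℚ) * g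

/-- Data of a candidate generating sequence: the polynomials `Q_l` and the numbers `m̄_l`. -/
structure GSData (K : Type) [Field K] where
  Q : ℕ → Poly K
  mbar : ℕ → ℕ

/-- `γ_l = ν(Q_l)`. -/
def GSData.γ (G : GSData K) (ν : RatVal (RF K)) (l : ℕ) : ℚ := vP ν (G.Q l)

/-- `d(l) = m̄_1 ⋯ m̄_{l-1}` (so `d(1) = 1`). -/
def GSData.d (G : GSData K) (l : ℕ) : ℕ := ∏ k ∈ Finset.Icc 1 (l - 1), G.mbar k

/-- An exponent vector `e` is admissible when `e k < m̄_k` for all `k ≥ 1`. -/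
def Adm (G : GSData K) (e : ℕ →₀ ℕ) : Prop := ∀ k, 1 ≤ k → e k < G.mbar k

/-- The monomial `X^{e 0} Q_1^{e 1} Q_2^{e 2} ⋯` in the generating sequence. -/
def Pmon (G : GSData K) (e : ℕ →₀ ℕ) : Poly K := e.prod fun k a => G.Q k ^ a

/-- The value `Σ_k e k • γ_k` of such a monomial. -/
def evalγ (ν : RatVal (RF K)) (G : GSData K) (e : ℕ →₀ ℕ) : ℚ :=
  e.sum fun k a => (a : ℚ) * G.γ ν k

/-- `(Q_l)_{l≥0}` is a generating sequence for `ν` in `K[X,Y]` (properties (1)–(4) of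
Section 2 of the paper, for the algorithm of Cutkosky–Vinh). -/
structure IsGenSeq (ν : RatVal (RF K)) (G : GSData K) : Prop where
  hQ0 : G.Q 0 = MvPolynomial.X 0
  hQ1 : G.Q 1 = MvPolynomial.X 1
  /-- `m̄_l ≥ 1`. -/
  hmbar_pos : ∀ l, 1 ≤ l → 0 < G.mbar l
  /-- `m̄_l γ_l ∈ G(γ_0, …, γ_{l-1})`. -/
  hmbar_mem : ∀ l, 1 ≤ l → ∃ c : ℕ → ℤ,
      (G.mbar l : ℚ) * G.γ ν l = ∑ k ∈ Finset.range l, (c k : ℚ) * G.γ ν k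
  /-- `m̄_l` is minimal with this property. -/
  hmbar_min : ∀ l, 1 ≤ l → ∀ q : ℕ, 0 < q →
      (∃ c : ℕ → ℤ, (q : ℚ) * G.γ ν l = ∑ k ∈ Finset.range l, (c k : ℚ) * G.γ ν k) →
      G.mbar l ≤ q
  /-- (1) `γ_{l+1} > m̄_l γ_l`. -/
  hgrowth : ∀ l, 1 ≤ l → (G.mbar l : ℚ) * G.γ ν l < G.γ ν (l + 1)
  /-- (2) `Q_l = Y^{d(l)} + (terms of lower Y-degree)`. -/
  hmonic : ∀ l, 1 ≤ l →
      G.Q l - MvPolynomial.X 1 ^ G.d l = 0 ∨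
      MvPolynomial.degreeOf 1 (G.Q l - MvPolynomial.X 1 ^ G.d l) < G.d l
  /-- (3), existence and uniqueness of the expansion of any nonzero `f` in terms of the
  admissible monomials `X^{e 0} Q_1^{e 1} ⋯ Q_r^{e r}`, `e k < m̄_k` for `k ≥ 1`. -/
  hexpand : ∀ f : Poly K, f ≠ 0 →
      ∃! c : (ℕ →₀ ℕ) →₀ K,
        (∀ e ∈ c.support, Adm G e) ∧
        f = c.sum fun e a => MvPolynomial.C a * Pmon G e
  /-- (3), the nonzero terms of the expansion have pairwise distinct values and
  `ν(f)` is the minimum of those values. -/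
  hval : ∀ f : Poly K, f ≠ 0 → ∀ c : (ℕ →₀ ℕ) →₀ K,
      (∀ e ∈ c.support, Adm G e) →
      f = (c.sum fun e a => MvPolynomial.C a * Pmon G e) →
      (∀ e ∈ c.support, ∀ e' ∈ c.support, evalγ ν G e = evalγ ν G e' → e = e') ∧
      ∃ e₀ ∈ c.support, vP ν f = evalγ ν G e₀ ∧
        ∀ e ∈ c.support, evalγ ν G e₀ ≤ evalγ ν G e
  /-- (4) `Q_{l+1} = Q_l^{m̄_l} - λ_l X^{c_0} Y^{c_1} Q_2^{c_2} ⋯ Q_{l-1}^{c_{l-1}}` with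
  `0 ≤ c_k < m̄_k` for `k ≥ 1` and `m̄_l γ_l = Σ_{k<l} c_k γ_k`. -/
  hrec : ∀ l, 1 ≤ l → ∃ lam : K, lam ≠ 0 ∧ ∃ cc : ℕ → ℕ,
      (∀ k, 1 ≤ k → k < l → cc k < G.mbar k) ∧
      G.Q (l + 1) =
        G.Q l ^ G.mbar l - MvPolynomial.C lam * ∏ k ∈ Finset.range l, G.Q k ^ cc k ∧
      (G.mbar l : ℚ) * G.γ ν l = ∑ k ∈ Finset.range l, (cc k : ℚ) * G.γ ν k

/-- The valuation semigroup `S^{R_𝔪}(ν) = {ν(h) : 0 ≠ h ∈ R_𝔪}`. -/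
def SRm (ν : RatVal (RF K)) : Set ℚ :=
  {q | ∃ f g : Poly K, f ≠ 0 ∧ MvPolynomial.constantCoeff g ≠ 0 ∧
    q = vP ν f - vP ν g}

/-- The valuation semigroup `S^{(A_{i,j,t,x})_𝔫}(ν)` of the invariant ring localized at
`𝔫 = (X,Y) ∩ A_{i,j,t,x}`. -/
def SA (ν : RatVal (RF K)) (α β : K) (i j t x : ℕ) : Set ℚ :=
  {q | ∃ f g : Poly K, f ≠ 0 ∧ Invariant α β i j t x f ∧ Invariant α β i j t x g ∧
    MvPolynomial.constantCoeff g ≠ 0 ∧ q = vP ν f - vP ν g}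

/-- `S` is a finitely generated module over the subsemigroup `T`:
`S = {s_1, …, s_k} + T` for finitely many `s_i ∈ S`. -/
def FGover (S T : Set ℚ) : Prop :=
  ∃ F : Finset ℚ, (F : Set ℚ) ⊆ S ∧ S = (F : Set ℚ) + T

/-!
Expand polynomials in the admissible monomials `X^{e 0} Q_1^{e 1} ⋯` of the generating sequence.
As the `Q_k` are eigenfunctions of each diagonal automorphism, uniqueness of the expansion forces
every monomial occurring in an eigenfunction to have the same eigenvalue as the function, and
since admissible monomials have pairwise distinct values, the monomial realizing `ν(f)` depends
only on `ν(f)`. So eigenfunctions of equal value have equal eigenvalues. If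
`γ_r = ν(f) - ν(g)` with `f, g` invariant, then `Q_r g` has the value of `f`, hence eigenvalue `1`,
and `Q_r` is invariant.
-/

lemma vP_mul (ν : RatVal (RF K)) {f g : Poly K} (hf : f ≠ 0) (hg : g ≠ 0) :
    vP ν (f * g) = vP ν f + vP ν g := by
  have hinj := IsFractionRing.injective (Poly K) (RF K)
  unfold vP
  rw [map_mul]
  exact ν.v_mul _ _ ((map_ne_zero_iff _ hinj).2 hf) ((map_ne_zero_iff _ hinj).2 hg)

lemma vP_one (ν : RatVal (RF K)) : vP ν (1 : Poly K) = 0 := by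
  have h := ν.v_mul 1 1 one_ne_zero one_ne_zero
  rw [mul_one, left_eq_add] at h
  rw [vP, map_one, h]

def expand (G : GSData K) (c : (ℕ →₀ ℕ) →₀ K) : Poly K :=
  c.sum fun e a => C a * Pmon G e

lemma expand_single (G : GSData K) (e : ℕ →₀ ℕ) (a : K) :
    expand G (Finsupp.single e a) = C a * Pmon G e :=
  Finsupp.sum_single_index (by simp)

/-- The eigenvalue of `Pmon G e` when each `Q_k` has eigenvalue `lam k`. -/
def monEigenvalue (lam : ℕ → K) (e : ℕ →₀ ℕ) : K := e.prod fun k a => lam k ^ a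

lemma map_Pmon_of_eigen {G : GSData K} {φ : Poly K →ₐ[K] Poly K} {lam : ℕ → K}
    (hφ : ∀ k, φ (G.Q k) = lam k • G.Q k) (e : ℕ →₀ ℕ) :
    φ (Pmon G e) = monEigenvalue lam e • Pmon G e := by
  simp only [Pmon, monEigenvalue, Finsupp.prod, map_prod, map_pow, hφ, smul_pow]
  exact Finset.prod_smul _ _ _

namespace IsGenSeq

variable {ν : RatVal (RF K)} {G : GSData K}

lemma Q_ne_zero (hG : IsGenSeq ν G) (l : ℕ) : G.Q l ≠ 0 := by
  rcases Nat.eq_zero_or_pos l with rfl | hl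
  · rw [hG.hQ0]; exact X_ne_zero 0
  intro h0
  have hdeg : degreeOf 1 ((X 1 : Poly K) ^ G.d l) = G.d l := by
    rw [degreeOf_eq_sup, support_X_pow]; simp
  rcases hG.hmonic l hl with h | h <;> rw [h0, zero_sub] at h
  · exact pow_ne_zero _ (X_ne_zero 1) (neg_eq_zero.1 h)
  · rw [degreeOf_neg, hdeg] at h; exact lt_irrefl _ h

lemma Pmon_ne_zero (hG : IsGenSeq ν G) (e : ℕ →₀ ℕ) : Pmon G e ≠ 0 :=
  Finset.prod_ne_zero_iff.2 fun k _ => pow_ne_zero _ (hG.Q_ne_zero k)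

lemma eq_of_expand_eq (hG : IsGenSeq ν G) {c c' : (ℕ →₀ ℕ) →₀ K}
    (hc : ∀ e ∈ c.support, Adm G e) (hc' : ∀ e ∈ c'.support, Adm G e)
    (h : expand G c = expand G c') (hne : expand G c ≠ 0) : c = c' :=
  (hG.hexpand _ hne).unique ⟨hc, rfl⟩ ⟨hc', h⟩

lemma exists_expand_vP (hG : IsGenSeq ν G) {f : Poly K} (hf : f ≠ 0) :
    ∃ c : (ℕ →₀ ℕ) →₀ K, (∀ e ∈ c.support, Adm G e) ∧ f = expand G c ∧
      ∃ e ∈ c.support, vP ν f = evalγ ν G e := by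
  obtain ⟨c, ⟨hc, hfc⟩, -⟩ := hG.hexpand f hf
  obtain ⟨-, e, he, hv, -⟩ := hG.hval f hf c hc hfc
  exact ⟨c, hc, hfc, e, he, hv⟩

/-- Apply the distinctness part of (3) to `Pmon G e + Pmon G e'`. -/
lemma eq_of_evalγ_eq (hG : IsGenSeq ν G) {e e' : ℕ →₀ ℕ} (he : Adm G e) (he' : Adm G e')
    (hv : evalγ ν G e = evalγ ν G e') : e = e' := by
  classical
  by_contra hne
  have hadm : ∀ (a b : K), ∀ e'' ∈ (Finsupp.single e a + Finsupp.single e' b).support,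
      Adm G e'' := by
    intro a b e'' h
    rcases Finset.mem_union.1 (Finsupp.support_add h) with h | h <;>
      rw [Finset.mem_singleton.1 (Finsupp.support_single_subset h)]
    exacts [he, he']
  have hexp : ∀ a b : K, expand G (Finsupp.single e a + Finsupp.single e' b)
      = C a * Pmon G e + C b * Pmon G e' := fun a b => by
    rw [expand, Finsupp.sum_add_index' (by simp) (by simp [add_mul])]
    exact congrArg₂ (· + ·) (expand_single G e a) (expand_single G e' b)
  have hsum : Pmon G e + Pmon G e' ≠ 0 := by
    intro h0
    have hc := hG.eq_of_expand_eq (hadm 1 0) (hadm 0 (-1))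
      (by simp only [hexp, C_1, C_0, C_neg]; linear_combination h0)
      (by rw [hexp]; simpa using hG.Pmon_ne_zero e)
    simpa [Finsupp.single_apply, hne] using DFunLike.congr_fun hc e
  have hval := (hG.hval _ hsum _ (hadm 1 1) (by rw [← expand, hexp]; simp)).1
  exact hne (hval e (by simp [Ne.symm hne]) e' (by simp [hne]) hv)

lemma monEigenvalue_eq_of_mem_support (hG : IsGenSeq ν G) {φ : Poly K →ₐ[K] Poly K}
    {lam : ℕ → K} (hφ : ∀ k, φ (G.Q k) = lam k • G.Q k) {f : Poly K} (hf : f ≠ 0) {μ : K}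
    (hμ : φ f = μ • f) {c : (ℕ →₀ ℕ) →₀ K} (hc : ∀ e ∈ c.support, Adm G e)
    (hfc : f = expand G c) {e : ℕ →₀ ℕ} (he : e ∈ c.support) :
    monEigenvalue lam e = μ := by
  classical
  -- `c'` expands `f + φ f - μ • f = f`, so it is `c` by uniqueness of the expansion.
  set c' : (ℕ →₀ ℕ) →₀ K := Finsupp.onFinset c.support
    (fun e => c e + (monEigenvalue lam e - μ) * c e) (fun e h => by
      rw [Finsupp.mem_support_iff]; rintro h0; simp [h0] at h)
  have hexp : expand G c' = f + φ f - μ • f := by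
    rw [expand, Finsupp.onFinset_sum _ (by simp), hfc, expand, Finsupp.sum, map_sum,
      Finset.smul_sum, ← Finset.sum_add_distrib, ← Finset.sum_sub_distrib]
    refine Finset.sum_congr rfl fun e _ => ?_
    rw [map_mul, map_Pmon_of_eigen hφ, ← algebraMap_eq, AlgHom.commutes, algebraMap_eq]
    simp only [smul_eq_C_mul, map_add, map_sub, map_mul]
    ring
  have hc' : c' = c := hG.eq_of_expand_eq (fun e h => hc e (Finsupp.support_onFinset_subset h)) hc
    (by rw [hexp, hμ, ← hfc, add_sub_cancel_right]) (by rwa [hexp, hμ, add_sub_cancel_right])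
  have hce : (monEigenvalue lam e - μ) * c e = 0 := by
    simpa [c'] using DFunLike.congr_fun hc' e
  exact sub_eq_zero.1 ((mul_eq_zero.1 hce).resolve_right (Finsupp.mem_support_iff.1 he))

/-- Eigenfunctions of equal value share the monomial realizing that value, whose eigenvalue they
both have. -/
lemma eigenvalue_eq_of_vP_eq (hG : IsGenSeq ν G) {φ : Poly K →ₐ[K] Poly K} {lam : ℕ → K}
    (hφ : ∀ k, φ (G.Q k) = lam k • G.Q k) {f f' : Poly K} (hf : f ≠ 0) (hf' : f' ≠ 0)
    {μ μ' : K} (hμ : φ f = μ • f) (hμ' : φ f' = μ' • f') (hv : vP ν f = vP ν f') : μ = μ' := by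
  obtain ⟨c, hc, hfc, e, he, hve⟩ := hG.exists_expand_vP hf
  obtain ⟨c', hc', hfc', e', he', hve'⟩ := hG.exists_expand_vP hf'
  obtain rfl : e = e' := hG.eq_of_evalγ_eq (hc e he) (hc' e' he') (by rw [← hve, ← hve', hv])
  rw [← hG.monEigenvalue_eq_of_mem_support hφ hf hμ hc hfc he,
    hG.monEigenvalue_eq_of_mem_support hφ hf' hμ' hc' hfc' he']

end IsGenSeq

theorem stmt_7_general (K : Type) [Field K] (α β : K) (i j t x : ℕ)
    (ν : RatVal (RF K)) (G : GSData K) (hG : IsGenSeq ν G)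
    (heig : ∀ l, IsEigen α β i j t x (G.Q l)) :
    ∀ r, 1 ≤ r → (G.γ ν r ∈ SA ν α β i j t x ↔ Invariant α β i j t x (G.Q r)) := by
  intro r _
  constructor
  · rintro ⟨f, g, hf, hfinv, hginv, hg0, hγ⟩
    have hg : g ≠ 0 := by rintro rfl; exact hg0 (map_zero _)
    have hv : vP ν f = vP ν (G.Q r * g) := by
      rw [vP_mul ν (hG.Q_ne_zero r) hg, ← GSData.γ, hγ, sub_add_cancel]
    intro p hp
    choose lam hlam using fun k => heig k p hp
    have hr : lam r = 1 := by
      refine (hG.eigenvalue_eq_of_vP_eq hlam hf (mul_ne_zero (hG.Q_ne_zero r) hg) ?_ ?_ hv).symm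
      · rw [hfinv p hp, one_smul]
      · rw [map_mul, hlam, hginv p hp, smul_mul_assoc]
    rw [hlam r, hr, one_smul]
  · intro hinv
    exact ⟨G.Q r, 1, hG.Q_ne_zero r, hinv, fun p _ => map_one _, by simp,
      by rw [vP_one, sub_zero]; rfl⟩

/-- for `r ≥ 1`, `γ_r ∈ S^{(A)_𝔫}(ν)` iff `Q_r ∈ A_{i,j,t,x}`. -/
theorem stmt_7 (K : Type) [Field K] [IsAlgClosed K] [CharZero K]
    (m n : ℕ) (hm : 0 < m) (hn : 0 < n) (α β : K)
    (hα : IsPrimitiveRoot α m) (hβ : IsPrimitiveRoot β n)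
    (i j t x : ℕ) (hi : 0 < i) (hj : 0 < j) (ht : 0 < t)
    (him : i ∣ m) (hjn : j ∣ n) (hti : t ∣ m / i) (htj : t ∣ n / j)
    (hxt : Nat.gcd x t = 1) (hx1 : 1 ≤ x) (hxle : x ≤ t)
    (ν : RatVal (RF K)) (hdom : DominatesRm ν) (hnd : Nondiscrete ν)
    (G : GSData K) (hG : IsGenSeq ν G)
    (heig : ∀ l, IsEigen α β i j t x (G.Q l)) :
    ∀ r, 1 ≤ r → (G.γ ν r ∈ SA ν α β i j t x ↔ Invariant α β i j t x (G.Q r)) :=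
  stmt_7_general K α β i j t x ν G hG heig

end DuttaPaper
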